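/- For any integer n ≥ 2, the limit lim_{r→∞} rⁿ/(n·∫₀^r h(t)^{n−1} dt) exists and equals (1 + ∫₀^∞ λ(s)·h(s) ds)^{−(n−1)}; in particular this limit is at most (1 + b₀)^{−(n−1)}. -/

import Mathlib

/-!
Write `g = h'`. Since `(h g)' = g² + λ h² ≥ 0`, `h g ≥ 0`; then `(g²)' = 2 λ h g ≥ 0` gives
`g² ≥ 1`, and as `g` cannot change sign, `g ≥ 1`. Hence `t ≤ h(t) ≤ t g(t)`, and
`(log g)' = λ h / g ≤ t λ` bounds `g` by `exp b₀`. So `λ h` is integrable, `g → c := 1 + ∫ λ h`,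
and integrating asymptotic equivalences gives `h(r) ~ c r` and `∫₀^r h^{n-1} ~ c^{n-1} rⁿ / n`.
Finally `h(t) ≥ t` gives `c ≥ 1 + b₀`.
-/

open Set Filter MeasureTheory Asymptotics Topology

section Ici

variable {f f' : ℝ → ℝ} {a : ℝ}

theorem monotoneOn_Ici_of_hasDerivWithinAt_nonneg
    (hf : ∀ t ∈ Ici a, HasDerivWithinAt f (f' t) (Ici a) t) (hf' : ∀ t ∈ Ioi a, 0 ≤ f' t) :
    MonotoneOn f (Ici a) := by
  refine monotoneOn_of_hasDerivWithinAt_nonneg (convex_Ici a)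
    (fun t ht => (hf t ht).continuousWithinAt) (fun t ht => ?_) (by simpa using hf')
  rw [interior_Ici] at ht ⊢
  exact ((hf t (Ioi_subset_Ici_self ht)).hasDerivAt (Ici_mem_nhds ht)).hasDerivWithinAt

theorem ContinuousOn.intervalIntegrable_of_Ici (hf : ContinuousOn f (Ici a)) {b : ℝ}
    (hab : a ≤ b) : IntervalIntegrable f volume a b :=
  (hf.mono Icc_subset_Ici_self).intervalIntegrable_of_Icc hab

theorem integral_eq_sub_of_hasDerivWithinAt_Ici
    (hf : ∀ t ∈ Ici a, HasDerivWithinAt f (f' t) (Ici a) t) (hf' : ContinuousOn f' (Ici a))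
    {b : ℝ} (hab : a ≤ b) : ∫ t in a..b, f' t = f b - f a :=
  intervalIntegral.integral_eq_sub_of_hasDeriv_right_of_le hab
    (fun t ht => (hf t ht.1).continuousWithinAt.mono Icc_subset_Ici_self)
    (fun t ht =>
      ((hf t (Ioi_subset_Ici_self ht.1)).hasDerivAt (Ici_mem_nhds ht.1)).hasDerivWithinAt)
    (hf'.intervalIntegrable_of_Ici hab)

end Ici

theorem isLittleO_intervalIntegral_atTop {f g : ℝ → ℝ}
    (hf : ∀ r ≥ 0, IntervalIntegrable f volume 0 r)
    (hg : ∀ r ≥ 0, IntervalIntegrable g volume 0 r)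
    (hfg : f =o[atTop] g) (hg_nonneg : ∀ᶠ t in atTop, 0 ≤ g t)
    (hg_int : Tendsto (fun r => ∫ t in (0 : ℝ)..r, g t) atTop atTop) :
    (fun r => ∫ t in (0 : ℝ)..r, f t) =o[atTop] fun r => ∫ t in (0 : ℝ)..r, g t := by
  refine isLittleO_iff.2 fun ε hε => ?_
  obtain ⟨R, hR⟩ := eventually_atTop.1
    (((isLittleO_iff.1 hfg (half_pos hε)).and hg_nonneg).and (eventually_ge_atTop 0))
  set C := ‖∫ t in (0 : ℝ)..R, f t‖ + ε / 2 * ‖∫ t in (0 : ℝ)..R, g t‖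
  filter_upwards [eventually_ge_atTop R, hg_int.eventually_ge_atTop (2 / ε * C)]
    with r hRr hCr
  have hR0 : 0 ≤ R := (hR R le_rfl).2
  have hRg : IntervalIntegrable g volume R r := (hg R hR0).symm.trans (hg r (hR0.trans hRr))
  have htail : ‖∫ t in R..r, f t‖ ≤ ε / 2 * ∫ t in R..r, g t := by
    rw [← intervalIntegral.integral_const_mul]
    refine intervalIntegral.norm_integral_le_of_norm_le hRr
      (ae_of_all _ fun t ht => ?_) (hRg.const_mul _)
    have := (hR t ht.1.le).1.1
    rwa [Real.norm_of_nonneg (hR t ht.1.le).1.2] at this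
  have hsplit_f := intervalIntegral.integral_add_adjacent_intervals (hf R hR0)
    ((hf R hR0).symm.trans (hf r (hR0.trans hRr)))
  have hsplit_g := intervalIntegral.integral_add_adjacent_intervals (hg R hR0) hRg
  have hpos : 0 ≤ ∫ t in (0 : ℝ)..r, g t := le_trans (by positivity) hCr
  rw [Real.norm_of_nonneg hpos, ← hsplit_f]
  calc ‖(∫ t in (0 : ℝ)..R, f t) + ∫ t in R..r, f t‖
      ≤ ‖∫ t in (0 : ℝ)..R, f t‖ + ε / 2 * ∫ t in R..r, g t :=
        (norm_add_le _ _).trans (by gcongr)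
    _ ≤ C + ε / 2 * ∫ t in (0 : ℝ)..r, g t := by
        rw [← hsplit_g]
        have := neg_abs_le (∫ t in (0 : ℝ)..R, g t)
        simp only [C, Real.norm_eq_abs]
        nlinarith
    _ ≤ ε * ∫ t in (0 : ℝ)..r, g t := by
        rw [div_mul_eq_mul_div, div_le_iff₀ hε] at hCr
        nlinarith

theorem Asymptotics.IsEquivalent.intervalIntegral_atTop {f g : ℝ → ℝ}
    (hf : ∀ r ≥ 0, IntervalIntegrable f volume 0 r)
    (hg : ∀ r ≥ 0, IntervalIntegrable g volume 0 r)
    (hfg : f ~[atTop] g) (hg_nonneg : ∀ᶠ t in atTop, 0 ≤ g t)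
    (hg_int : Tendsto (fun r => ∫ t in (0 : ℝ)..r, g t) atTop atTop) :
    (fun r => ∫ t in (0 : ℝ)..r, f t) ~[atTop] fun r => ∫ t in (0 : ℝ)..r, g t := by
  refine (isLittleO_intervalIntegral_atTop (fun r hr => (hf r hr).sub (hg r hr)) hg hfg
    hg_nonneg hg_int).congr' ?_ EventuallyEq.rfl
  filter_upwards [eventually_ge_atTop 0] with r hr
  exact intervalIntegral.integral_sub (hf r hr) (hg r hr)

structure IsJacobiPair (lam h g : ℝ → ℝ) : Prop where
  hasDerivWithinAt_h : ∀ t ∈ Ici (0 : ℝ), HasDerivWithinAt h (g t) (Ici 0) t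
  hasDerivWithinAt_g : ∀ t ∈ Ici (0 : ℝ), HasDerivWithinAt g (lam t * h t) (Ici 0) t
  h_zero : h 0 = 0
  g_zero : g 0 = 1

namespace IsJacobiPair

variable {lam h g : ℝ → ℝ}

theorem continuousOn_h (hs : IsJacobiPair lam h g) : ContinuousOn h (Ici 0) :=
  fun t ht => (hs.hasDerivWithinAt_h t ht).continuousWithinAt

theorem continuousOn_g (hs : IsJacobiPair lam h g) : ContinuousOn g (Ici 0) :=
  fun t ht => (hs.hasDerivWithinAt_g t ht).continuousWithinAt

theorem one_le_g (hs : IsJacobiPair lam h g) (hlam : ∀ t ∈ Ici (0 : ℝ), 0 ≤ lam t) :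
    ∀ t ∈ Ici (0 : ℝ), 1 ≤ g t := by
  have hhg : ∀ t ∈ Ici (0 : ℝ), 0 ≤ h t * g t := by
    have := monotoneOn_Ici_of_hasDerivWithinAt_nonneg
      (fun t ht => (hs.hasDerivWithinAt_h t ht).mul (hs.hasDerivWithinAt_g t ht))
      (fun t ht => by
        nlinarith [hlam t (Ioi_subset_Ici_self ht), sq_nonneg (g t), sq_nonneg (h t)])
    intro t ht
    simpa [hs.h_zero] using this self_mem_Ici ht ht
  have hg_sq : ∀ t ∈ Ici (0 : ℝ), 1 ≤ g t ^ 2 := by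
    have := monotoneOn_Ici_of_hasDerivWithinAt_nonneg
      (fun t ht => (hs.hasDerivWithinAt_g t ht).pow 2)
      (fun t ht => by
        have := mul_nonneg (hlam t (Ioi_subset_Ici_self ht)) (hhg t (Ioi_subset_Ici_self ht))
        norm_num
        nlinarith)
    intro t ht
    simpa [hs.g_zero] using this self_mem_Ici ht ht
  intro t ht
  by_contra hlt
  have hneg : g t < 0 := by nlinarith [hg_sq t ht]
  obtain ⟨s, hs_mem, hs_zero⟩ := intermediate_value_Icc' ht
    (hs.continuousOn_g.mono Icc_subset_Ici_self) ⟨hneg.le, by rw [hs.g_zero]; exact zero_le_one⟩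
  have := hg_sq s hs_mem.1
  rw [hs_zero] at this
  norm_num at this

theorem le_h (hs : IsJacobiPair lam h g) (hlam : ∀ t ∈ Ici (0 : ℝ), 0 ≤ lam t) :
    ∀ t ∈ Ici (0 : ℝ), t ≤ h t := by
  have := monotoneOn_Ici_of_hasDerivWithinAt_nonneg
    (fun t ht => (hs.hasDerivWithinAt_h t ht).sub (hasDerivWithinAt_id t _))
    (fun t ht => sub_nonneg.2 (hs.one_le_g hlam t (Ioi_subset_Ici_self ht)))
  intro t ht
  simpa [hs.h_zero] using this self_mem_Ici ht ht

theorem h_nonneg (hs : IsJacobiPair lam h g) (hlam : ∀ t ∈ Ici (0 : ℝ), 0 ≤ lam t) :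
    ∀ t ∈ Ici (0 : ℝ), 0 ≤ h t :=
  fun t ht => le_trans ht (hs.le_h hlam t ht)

theorem h_le_mul_g (hs : IsJacobiPair lam h g) (hlam : ∀ t ∈ Ici (0 : ℝ), 0 ≤ lam t) :
    ∀ t ∈ Ici (0 : ℝ), h t ≤ t * g t := by
  have := monotoneOn_Ici_of_hasDerivWithinAt_nonneg
    (fun t ht => ((hasDerivWithinAt_id t _).mul (hs.hasDerivWithinAt_g t ht)).sub
      (hs.hasDerivWithinAt_h t ht))
    (fun t ht => by
      simp only [id, one_mul, add_sub_cancel_left]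
      exact mul_nonneg (le_of_lt ht) (mul_nonneg (hlam t (Ioi_subset_Ici_self ht))
        (hs.h_nonneg hlam t (Ioi_subset_Ici_self ht))))
  intro t ht
  simpa [hs.h_zero] using this self_mem_Ici ht ht

theorem g_le_exp (hs : IsJacobiPair lam h g) (hlam : ∀ t ∈ Ici (0 : ℝ), 0 ≤ lam t)
    (hlamc : ContinuousOn lam (Ici 0)) (hb₀ : IntegrableOn (fun s => s * lam s) (Ioi 0)) :
    ∀ r ∈ Ici (0 : ℝ), g r ≤ Real.exp (∫ s in Ioi 0, s * lam s) := by
  intro r hr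
  have hg_pos : ∀ t ∈ Ici (0 : ℝ), 0 < g t :=
    fun t ht => one_pos.trans_le (hs.one_le_g hlam t ht)
  have hlog : ∫ t in (0 : ℝ)..r, lam t * h t / g t = Real.log (g r) := by
    rw [integral_eq_sub_of_hasDerivWithinAt_Ici
      (fun t ht => (hs.hasDerivWithinAt_g t ht).log (hg_pos t ht).ne')
      ((hlamc.mul hs.continuousOn_h).div hs.continuousOn_g fun t ht => (hg_pos t ht).ne') hr,
      hs.g_zero, Real.log_one, sub_zero]
  have hle : ∫ t in (0 : ℝ)..r, lam t * h t / g t ≤ ∫ t in (0 : ℝ)..r, t * lam t := by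
    refine intervalIntegral.integral_mono_on hr ?_ ?_ fun t ht => ?_
    · exact (((hlamc.mul hs.continuousOn_h).div hs.continuousOn_g fun t ht =>
        (hg_pos t ht).ne').mono Icc_subset_Ici_self).intervalIntegrable_of_Icc hr
    · exact ((continuousOn_id.mul hlamc).mono Icc_subset_Ici_self).intervalIntegrable_of_Icc hr
    rw [div_le_iff₀ (hg_pos t ht.1)]
    have := mul_le_mul_of_nonneg_left (hs.h_le_mul_g hlam t ht.1) (hlam t ht.1)
    linarith
  have htail : ∫ t in (0 : ℝ)..r, t * lam t ≤ ∫ s in Ioi 0, s * lam s := by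
    rw [intervalIntegral.integral_of_le hr]
    exact setIntegral_mono_set hb₀
      ((ae_restrict_mem measurableSet_Ioi).mono fun s hs_pos =>
        mul_nonneg (le_of_lt hs_pos) (hlam s (Ioi_subset_Ici_self hs_pos)))
      Ioc_subset_Ioi_self.eventuallyLE
  rw [← Real.exp_log (hg_pos r hr), Real.exp_le_exp, ← hlog]
  exact hle.trans htail

theorem integrableOn_lam_mul_h (hs : IsJacobiPair lam h g)
    (hlam : ∀ t ∈ Ici (0 : ℝ), 0 ≤ lam t) (hlamc : ContinuousOn lam (Ici 0))
    (hb₀ : IntegrableOn (fun s => s * lam s) (Ioi 0)) :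
    IntegrableOn (fun s => lam s * h s) (Ioi 0) := by
  refine (hb₀.const_mul (Real.exp (∫ s in Ioi 0, s * lam s))).mono'
    (((hlamc.mul hs.continuousOn_h).mono Ioi_subset_Ici_self).aestronglyMeasurable
      measurableSet_Ioi) ((ae_restrict_mem measurableSet_Ioi).mono fun t ht_pos => ?_)
  have ht : t ∈ Ici (0 : ℝ) := Ioi_subset_Ici_self ht_pos
  rw [Real.norm_of_nonneg (mul_nonneg (hlam t ht) (hs.h_nonneg hlam t ht))]
  calc lam t * h t ≤ lam t * (t * g t) :=
        mul_le_mul_of_nonneg_left (hs.h_le_mul_g hlam t ht) (hlam t ht)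
    _ ≤ lam t * (t * Real.exp (∫ s in Ioi 0, s * lam s)) := by
        gcongr
        · exact hlam t ht
        · exact hs.g_le_exp hlam hlamc hb₀ t ht
    _ = _ := by ring

theorem integral_lam_mul_h_nonneg (hs : IsJacobiPair lam h g)
    (hlam : ∀ t ∈ Ici (0 : ℝ), 0 ≤ lam t) : 0 ≤ ∫ s in Ioi 0, lam s * h s :=
  setIntegral_nonneg measurableSet_Ioi fun s hs_pos =>
    mul_nonneg (hlam s (Ioi_subset_Ici_self hs_pos))
      (hs.h_nonneg hlam s (Ioi_subset_Ici_self hs_pos))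

theorem integral_mul_lam_le (hs : IsJacobiPair lam h g)
    (hlam : ∀ t ∈ Ici (0 : ℝ), 0 ≤ lam t) (hlamc : ContinuousOn lam (Ici 0))
    (hb₀ : IntegrableOn (fun s => s * lam s) (Ioi 0)) :
    ∫ s in Ioi 0, s * lam s ≤ ∫ s in Ioi 0, lam s * h s :=
  setIntegral_mono_on hb₀ (hs.integrableOn_lam_mul_h hlam hlamc hb₀) measurableSet_Ioi
    fun s hs_pos => by
      rw [mul_comm]
      exact mul_le_mul_of_nonneg_left (hs.le_h hlam s (Ioi_subset_Ici_self hs_pos))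
        (hlam s (Ioi_subset_Ici_self hs_pos))

theorem tendsto_g (hs : IsJacobiPair lam h g) (hlam : ∀ t ∈ Ici (0 : ℝ), 0 ≤ lam t)
    (hlamc : ContinuousOn lam (Ici 0)) (hb₀ : IntegrableOn (fun s => s * lam s) (Ioi 0)) :
    Tendsto g atTop (𝓝 (1 + ∫ s in Ioi 0, lam s * h s)) := by
  refine (tendsto_const_nhds.add (intervalIntegral_tendsto_integral_Ioi 0
    (hs.integrableOn_lam_mul_h hlam hlamc hb₀) tendsto_id)).congr' ?_
  filter_upwards [eventually_ge_atTop 0] with r hr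
  rw [id, integral_eq_sub_of_hasDerivWithinAt_Ici hs.hasDerivWithinAt_g
    (hlamc.mul hs.continuousOn_h) hr, hs.g_zero, add_sub_cancel]

theorem isEquivalent_h (hs : IsJacobiPair lam h g) (hlam : ∀ t ∈ Ici (0 : ℝ), 0 ≤ lam t)
    (hlamc : ContinuousOn lam (Ici 0)) (hb₀ : IntegrableOn (fun s => s * lam s) (Ioi 0)) :
    h ~[atTop] fun r => (1 + ∫ s in Ioi 0, lam s * h s) * r := by
  set c := 1 + ∫ s in Ioi 0, lam s * h s
  have hc : 0 < c := add_pos_of_pos_of_nonneg one_pos (hs.integral_lam_mul_h_nonneg hlam)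
  have hg : g ~[atTop] fun _ => c :=
    (isEquivalent_const_iff_tendsto hc.ne').2 (hs.tendsto_g hlam hlamc hb₀)
  have hint := hg.intervalIntegral_atTop (fun r => hs.continuousOn_g.intervalIntegrable_of_Ici)
    (fun _ _ => intervalIntegrable_const) (Eventually.of_forall fun _ => hc.le)
    (by simpa using tendsto_id.atTop_mul_const hc)
  refine (hint.congr_left ?_).congr_right ?_
  · filter_upwards [eventually_ge_atTop 0] with r hr
    rw [integral_eq_sub_of_hasDerivWithinAt_Ici hs.hasDerivWithinAt_h hs.continuousOn_g hr,
      hs.h_zero, sub_zero]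
  · exact Eventually.of_forall fun r => by simp [mul_comm]

end IsJacobiPair

theorem tendsto_pow_div_integral_pow {h : ℝ → ℝ} {c : ℝ} (hc : 0 < c)
    (hh : ContinuousOn h (Ici 0)) (hequiv : h ~[atTop] fun r => c * r) {n : ℕ} (hn : 1 ≤ n) :
    Tendsto (fun r => r ^ n / ((n : ℝ) * ∫ t in (0 : ℝ)..r, h t ^ (n - 1))) atTop
      (𝓝 (c ^ (n - 1))⁻¹) := by
  have hn0 : (n : ℝ) ≠ 0 := by positivity
  have hmodel : ∀ r, ∫ t in (0 : ℝ)..r, (c * t) ^ (n - 1) = c ^ (n - 1) * r ^ n / n := by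
    intro r
    simp_rw [mul_pow, intervalIntegral.integral_const_mul, integral_pow, Nat.sub_add_cancel hn,
      zero_pow (by omega : n ≠ 0)]
    push_cast [hn]
    ring
  have hint : (fun r => ∫ t in (0 : ℝ)..r, h t ^ (n - 1)) ~[atTop]
      fun r => c ^ (n - 1) * r ^ n / n := by
    simp_rw [← hmodel]
    refine (hequiv.pow (n - 1)).intervalIntegral_atTop
      (fun r => (hh.pow _).intervalIntegrable_of_Ici)
      (fun r _ => (by fun_prop : Continuous fun t => (c * t) ^ (n - 1)).intervalIntegrable 0 r)
      (by filter_upwards [eventually_ge_atTop 0] with t ht; positivity) ?_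
    simp_rw [hmodel]
    exact ((tendsto_pow_atTop (by omega)).const_mul_atTop (by positivity)).atTop_div_const
      (by positivity)
  have hquot := (IsEquivalent.refl (u := fun r : ℝ => r ^ n)).div
    ((IsEquivalent.refl (u := fun _ : ℝ => (n : ℝ))).mul hint)
  refine hquot.symm.tendsto_nhds (tendsto_const_nhds.congr' ?_)
  filter_upwards [eventually_gt_atTop 0] with r hr
  simp only [Pi.div_apply, Pi.mul_apply]
  field_simp

theorem isJacobiPair_derivWithin {lam h : ℝ → ℝ} (hh : ContDiffOn ℝ 2 h (Ici 0))
    (ode : ∀ t ∈ Ici (0 : ℝ), derivWithin (derivWithin h (Ici 0)) (Ici 0) t = lam t * h t)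
    (h0 : h 0 = 0) (h'0 : derivWithin h (Ici 0) 0 = 1) :
    IsJacobiPair lam h (derivWithin h (Ici 0)) where
  hasDerivWithinAt_h t ht := (hh.differentiableOn (by norm_num) t ht).hasDerivWithinAt
  hasDerivWithinAt_g t ht := by
    rw [← ode t ht]
    exact ((hh.derivWithin (m := 1) (uniqueDiffOn_Ici 0) (by norm_num)).differentiableOn
      one_ne_zero t ht).hasDerivWithinAt
  h_zero := h0
  g_zero := h'0

theorem stmt_12_general (lam h : ℝ → ℝ)
    (hlamc : ContinuousOn lam (Ici 0)) (hlamnn : ∀ t ∈ Ici (0 : ℝ), 0 ≤ lam t)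
    (hb₀ : IntegrableOn (fun s => s * lam s) (Ioi 0))
    (hh : ContDiffOn ℝ 2 h (Ici 0))
    (ode : ∀ t ∈ Ici (0 : ℝ),
      derivWithin (derivWithin h (Ici 0)) (Ici 0) t = lam t * h t)
    (h0 : h 0 = 0) (h'0 : derivWithin h (Ici 0) 0 = 1)
    (n : ℕ) (hn : 2 ≤ n) :
    Tendsto (fun r => r ^ n / ((n : ℝ) * ∫ t in (0 : ℝ)..r, h t ^ (n - 1)))
      atTop (nhds (((1 + ∫ s in Ioi (0 : ℝ), lam s * h s) ^ (n - 1))⁻¹)) ∧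
    ((1 + ∫ s in Ioi (0 : ℝ), lam s * h s) ^ (n - 1))⁻¹ ≤
      ((1 + ∫ s in Ioi (0 : ℝ), s * lam s) ^ (n - 1))⁻¹ := by
  have hs := isJacobiPair_derivWithin hh ode h0 h'0
  refine ⟨tendsto_pow_div_integral_pow
    (add_pos_of_pos_of_nonneg one_pos (hs.integral_lam_mul_h_nonneg hlamnn)) hs.continuousOn_h
    (hs.isEquivalent_h hlamnn hlamc hb₀) (by omega), ?_⟩
  have hb₀_nonneg : 0 ≤ ∫ s in Ioi (0 : ℝ), s * lam s := setIntegral_nonneg measurableSet_Ioi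
    fun s hs_pos => mul_nonneg (le_of_lt hs_pos) (hlamnn s (Ioi_subset_Ici_self hs_pos))
  have hb₀_le := hs.integral_mul_lam_le hlamnn hlamc hb₀
  gcongr

/-- For `n ≥ 2`, `lim_{r→∞} rⁿ/(n ∫₀^r h^{n-1}) = (1 + ∫₀^∞ λ h)^{-(n-1)} ≤ (1+b₀)^{-(n-1)}`. -/
theorem stmt_12 (lam h : ℝ → ℝ)
    (hlamc : ContinuousOn lam (Ici 0)) (hlamnn : ∀ t ∈ Ici (0 : ℝ), 0 ≤ lam t)
    (hlamanti : AntitoneOn lam (Ici 0))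
    (hb₀ : IntegrableOn (fun s => s * lam s) (Ioi 0))
    (hh : ContDiffOn ℝ 2 h (Ici 0))
    (ode : ∀ t ∈ Ici (0 : ℝ),
      derivWithin (derivWithin h (Ici 0)) (Ici 0) t = lam t * h t)
    (h0 : h 0 = 0) (h'0 : derivWithin h (Ici 0) 0 = 1)
    (n : ℕ) (hn : 2 ≤ n) :
    Tendsto (fun r => r ^ n / ((n : ℝ) * ∫ t in (0 : ℝ)..r, h t ^ (n - 1)))
      atTop (nhds (((1 + ∫ s in Ioi (0 : ℝ), lam s * h s) ^ (n - 1))⁻¹)) ∧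
    ((1 + ∫ s in Ioi (0 : ℝ), lam s * h s) ^ (n - 1))⁻¹ ≤
      ((1 + ∫ s in Ioi (0 : ℝ), s * lam s) ^ (n - 1))⁻¹ :=
  stmt_12_general lam h hlamc hlamnn hb₀ hh ode h0 h'0 n hn
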